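/- For $n\ge 1$, $R>0$, $\tau>0$, the function $M(r,t)=\frac{r^n}{n(t+\tau)}$ for $0\le r\le R\big(\frac{t+\tau}{\tau}\big)^{1/n}$ and $M(r,t)=\frac{R^n}{n\tau}$ for $r\ge R\big(\frac{t+\tau}{\tau}\big)^{1/n}$ is, for each $t>0$, a locally Lipschitz nondecreasing function of $r$ and satisfies the Burgers equation $M_t+\frac{1}{r^{n-1}}M M_r=0$ at every point $(r,t)$ with $r\ne R\big(\frac{t+\tau}{\tau}\big)^{1/n}$ and $r>0$. -/

import Mathlib

/-!
The interface radius `ρ(t) = R((t+τ)/τ)^{1/n}` satisfies `ρ(t)ⁿ/(n(t+τ)) = Rⁿ/(nτ)`, so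
the mass function is `M(r,t) = min(r, ρ(t))ⁿ/(n(t+τ))`: a monotone power of a `1`-Lipschitz function
of `r`. Off the interface, `M` agrees near `(r,t)` either with the self-similar profile
`rⁿ/(n(t+τ))`, which solves the Burgers equation by direct computation, or with a constant.
-/

open Filter Topology Set

noncomputable def patchRadius (n : ℕ) (R τ t : ℝ) : ℝ := R * ((t + τ) / τ) ^ ((1:ℝ) / n)

noncomputable def patchMass (n : ℕ) (R τ r t : ℝ) : ℝ :=
  if r ≤ patchRadius n R τ t then r ^ n / (n * (t + τ)) else R ^ n / (n * τ)

theorem LocallyLipschitz.exists_lipschitzOnWith_ball {X Y : Type*} [PseudoMetricSpace X]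
    [PseudoEMetricSpace Y] {f : X → Y} (hf : LocallyLipschitz f) (x : X) :
    ∃ (K : NNReal) (ε : ℝ), 0 < ε ∧ LipschitzOnWith K f (Metric.ball x ε) := by
  obtain ⟨K, U, hU, hK⟩ := hf x
  obtain ⟨ε, hε, hball⟩ := Metric.mem_nhds_iff.1 hU
  exact ⟨K, ε, hε, hK.mono hball⟩

section VortexPatch

variable {n : ℕ} {R τ t : ℝ}

theorem continuous_patchRadius : Continuous (patchRadius n R τ) :=
  continuous_const.mul <|
    (Real.continuous_rpow_const (by positivity)).comp
      ((continuous_id.add continuous_const).div_const τ)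

theorem patchRadius_nonneg (hR : 0 ≤ R) (hτ : 0 < τ) (ht : 0 ≤ t + τ) :
    0 ≤ patchRadius n R τ t :=
  mul_nonneg hR (Real.rpow_nonneg (div_nonneg ht hτ.le) _)

theorem patchRadius_pow (hn : n ≠ 0) (hτ : 0 < τ) (ht : 0 ≤ t + τ) :
    patchRadius n R τ t ^ n = R ^ n * ((t + τ) / τ) := by
  rw [patchRadius, mul_pow, one_div, Real.rpow_inv_natCast_pow (div_nonneg ht hτ.le) hn]

theorem patchMass_eq_min_pow (hn : n ≠ 0) (hτ : 0 < τ) (ht : 0 < t + τ) (r : ℝ) :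
    patchMass n R τ r t = min r (patchRadius n R τ t) ^ n / (n * (t + τ)) := by
  unfold patchMass
  split_ifs with h
  · rw [min_eq_left h]
  · rw [min_eq_right (not_le.1 h).le, patchRadius_pow hn hτ ht.le]
    field_simp

theorem monotoneOn_patchMass (hn : n ≠ 0) (hR : 0 ≤ R) (hτ : 0 < τ) (ht : 0 < t + τ) :
    MonotoneOn (fun r => patchMass n R τ r t) (Ici 0) := by
  intro a ha b _ hab
  simp only [patchMass_eq_min_pow hn hτ ht]
  have hmin_nonneg := le_min ha (patchRadius_nonneg (n := n) hR hτ ht.le)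
  gcongr

theorem locallyLipschitz_patchMass (hn : n ≠ 0) (hτ : 0 < τ) (ht : 0 < t + τ) :
    LocallyLipschitz (fun r => patchMass n R τ r t) := by
  simp only [patchMass_eq_min_pow hn hτ ht]
  have hpow : LocallyLipschitz fun x : ℝ => x ^ n / (n * (t + τ)) :=
    ((contDiff_id.pow n).div_const _ : ContDiff ℝ 1 _).locallyLipschitz
  exact hpow.comp (LipschitzWith.id.min_const _).locallyLipschitz

theorem patchMass_eventuallyEq_inner {r : ℝ} (h : r < patchRadius n R τ t) :
    ∀ᶠ p : ℝ × ℝ in 𝓝 (r, t), patchMass n R τ p.1 p.2 = p.1 ^ n / (n * (p.2 + τ)) := by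
  have hopen : IsOpen {p : ℝ × ℝ | p.1 < patchRadius n R τ p.2} :=
    isOpen_lt continuous_fst (continuous_patchRadius.comp continuous_snd)
  filter_upwards [hopen.mem_nhds h] with p hp
  exact if_pos hp.le

theorem patchMass_eventuallyEq_outer {r : ℝ} (h : patchRadius n R τ t < r) :
    ∀ᶠ p : ℝ × ℝ in 𝓝 (r, t), patchMass n R τ p.1 p.2 = R ^ n / (n * τ) := by
  have hopen : IsOpen {p : ℝ × ℝ | patchRadius n R τ p.2 < p.1} :=
    isOpen_lt (continuous_patchRadius.comp continuous_snd) continuous_fst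
  filter_upwards [hopen.mem_nhds h] with p hp
  exact if_neg hp.not_ge

theorem patchMass_burgers (hn : n ≠ 0) {r : ℝ} (hr : 0 < r) (ht : 0 < t + τ)
    (hne : r ≠ patchRadius n R τ t) :
    ∃ Mt Mr : ℝ, HasDerivAt (fun s => patchMass n R τ s t) Mr r ∧
      HasDerivAt (fun σ => patchMass n R τ r σ) Mt t ∧
      Mt + (1 / r ^ (n - 1)) * patchMass n R τ r t * Mr = 0 := by
  rcases hne.lt_or_gt with hin | hout
  · have h := patchMass_eventuallyEq_inner hin
    have hMr : HasDerivAt (fun s : ℝ => s ^ n / (n * (t + τ))) (r ^ (n - 1) / (t + τ)) r := by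
      refine ((hasDerivAt_pow n r).div_const (n * (t + τ))).congr_deriv ?_
      rw [mul_div_mul_left _ _ (Nat.cast_ne_zero.2 hn)]
    have hMt :
        HasDerivAt (fun σ : ℝ => r ^ n / (n * (σ + τ))) (-(r ^ n / (n * (t + τ) ^ 2))) t := by
      have hden := ((hasDerivAt_id t).add_const τ).const_mul (n : ℝ)
      refine ((hasDerivAt_const t (r ^ n)).div hden (by positivity)).congr_deriv ?_
      simp only [id, zero_mul, zero_sub, mul_one]
      field_simp
    refine ⟨_, _, hMr.congr_of_eventuallyEq (h.curry_nhds.mono fun _ h => h.self_of_nhds),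
      hMt.congr_of_eventuallyEq h.curry_nhds.self_of_nhds, ?_⟩
    rw [h.self_of_nhds]
    have : r ^ (n - 1) ≠ 0 := by positivity
    field_simp
    ring
  · have h := patchMass_eventuallyEq_outer hout
    refine ⟨0, 0, ?_, ?_, by ring⟩
    · exact (hasDerivAt_const _ _).congr_of_eventuallyEq
        (h.curry_nhds.mono fun _ h => h.self_of_nhds)
    · exact (hasDerivAt_const _ _).congr_of_eventuallyEq h.curry_nhds.self_of_nhds

end VortexPatch

/-- The mass function of the vortex patch: `M(r,t) = rⁿ/(n(t+τ))` for
`0 ≤ r ≤ R((t+τ)/τ)^{1/n}` and `M(r,t) = Rⁿ/(nτ)` beyond, is for each `t > 0` a locally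
Lipschitz nondecreasing function of `r` on `[0,∞)` and satisfies the Burgers equation
`M_t + r^{1-n} M M_r = 0` at every point `(r,t)` with `r > 0` away from the interface. -/
theorem stmt_9 (n : ℕ) (hn : 1 ≤ n) (R τ : ℝ) (hR : 0 < R) (hτ : 0 < τ)
    (M : ℝ → ℝ → ℝ)
    (hM : ∀ r t : ℝ, M r t =
      if r ≤ R * ((t + τ) / τ) ^ ((1:ℝ)/n) then r ^ n / (n * (t + τ)) else R ^ n / (n * τ)) :
    (∀ t : ℝ, 0 < t →
      MonotoneOn (fun r => M r t) (Set.Ici 0) ∧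
      ∀ r : ℝ, 0 ≤ r → ∃ (K : NNReal) (ε : ℝ), 0 < ε ∧
        LipschitzOnWith K (fun r => M r t) (Metric.ball r ε ∩ Set.Ici 0)) ∧
    (∀ r t : ℝ, 0 < r → 0 < t → r ≠ R * ((t + τ) / τ) ^ ((1:ℝ)/n) →
      ∃ Mt Mr : ℝ, HasDerivAt (fun s => M s t) Mr r ∧ HasDerivAt (fun σ => M r σ) Mt t ∧
        Mt + (1 / r ^ (n - 1)) * M r t * Mr = 0) := by
  obtain rfl : M = patchMass n R τ := funext fun r => funext fun t => hM r t
  have hn0 : n ≠ 0 := by omega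
  refine ⟨fun t ht => ⟨monotoneOn_patchMass hn0 hR.le hτ (by linarith), fun r _ => ?_⟩,
    fun r t hr ht hne => patchMass_burgers hn0 hr (by linarith) hne⟩
  obtain ⟨K, ε, hε, hK⟩ :=
    (locallyLipschitz_patchMass (t := t) hn0 hτ (by linarith)).exists_lipschitzOnWith_ball r
  exact ⟨K, ε, hε, hK.mono inter_subset_left⟩
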